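/- Let (L,E,R,∂₂,∂₁,{,}) be a 2-crossed module of commutative algebras. The formula e▶²_e(e',l,l') = (ee', e▶'l, ∂₁(e)▶l' − {(∂₂(l)+e')⊗e}) defines an algebra action of E on (E⋉_{▶'}L)⋉_{▶*}L. -/

import Mathlib

/-- An action of a commutative `k`-algebra `R` on a commutative `k`-algebra `M`:
a `k`-bilinear map satisfying `r▶(mm') = (r▶m)m' = m(r▶m')` and `(rr')▶m = r▶(r'▶m)`. -/
structure AlgAction (k R M : Type*) [CommRing k] [CommRing R] [CommRing M]
    [Algebra k R] [Algebra k M] where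
  act : R →ₗ[k] M →ₗ[k] M
  a1 : ∀ (r : R) (m m' : M), act r (m * m') = act r m * m'
  a1' : ∀ (r : R) (m m' : M), act r (m * m') = m * act r m'
  a2 : ∀ (r r' : R) (m : M), act (r * r') m = act r (act r' m)

/-- A 2-crossed module of commutative `k`-algebras, with Peiffer lifting `lift e e' = {e ⊗ e'}`.
The action `e ▶' l` of `E` on `L` is `lift e (d2 l)` (axiom 2XM5 is definitional). -/
structure TwoCrossedModule (k L E R : Type*) [CommRing k] [CommRing L] [CommRing E] [CommRing R]
    [Algebra k L] [Algebra k E] [Algebra k R] where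
  actE : AlgAction k R E
  actL : AlgAction k R L
  d2 : L →ₗ[k] E
  d1 : E →ₗ[k] R
  d2_mul : ∀ l l' : L, d2 (l * l') = d2 l * d2 l'
  d1_mul : ∀ e e' : E, d1 (e * e') = d1 e * d1 e'
  comp : ∀ l : L, d1 (d2 l) = 0
  d1_act : ∀ (r : R) (e : E), d1 (actE.act r e) = r * d1 e
  d2_act : ∀ (r : R) (l : L), d2 (actL.act r l) = actE.act r (d2 l)
  lift : E →ₗ[k] E →ₗ[k] L
  axm1 : ∀ e e' : E, d2 (lift e e') = e * e' - actE.act (d1 e') e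
  axm2 : ∀ l l' : L, lift (d2 l) (d2 l') = l * l'
  axm3 : ∀ e e' e'' : E, lift e (e' * e'') = lift (e * e') e'' + actL.act (d1 e'') (lift e e')
  axm4 : ∀ (l : L) (e : E), lift (d2 l) e = lift e (d2 l) - actL.act (d1 e) l
  axm6a : ∀ (r : R) (e e' : E), actL.act r (lift e e') = lift (actE.act r e) e'
  axm6b : ∀ (r : R) (e e' : E), actL.act r (lift e e') = lift e (actE.act r e')

/-!
Everything is governed by the algebra map `E ⋉ L → E`, `(e', l) ↦ ∂₂(l) + e'`: by 2XM2,
`(e', l) ▶* l' = {(∂₂(l) + e') ⊗ ∂₂(l')}`. Writing `x, y` for the images of `p, q`, the action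
becomes multiplicative once two consequences of 2XM1, 2XM3 and 2XM6 are available:
`{y ⊗ ∂₂{x ⊗ e}} = {yx ⊗ e}` and `{xe ⊗ ∂₂(l)} = l{x ⊗ e} + ∂₁(e) ▶ {x ⊗ ∂₂(l)}`.
-/

namespace TwoCrossedModule

variable {k L E R : Type*} [CommRing k] [CommRing L] [CommRing E] [CommRing R]
  [Algebra k L] [Algebra k E] [Algebra k R] (T : TwoCrossedModule k L E R)

lemma lift_mul_d2 (e e' : E) (l : L) : T.lift e (e' * T.d2 l) = T.lift (e * e') (T.d2 l) := by
  simpa [T.comp] using T.axm3 e e' (T.d2 l)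

lemma d2_lift_d2 (e : E) (l : L) : T.d2 (T.lift e (T.d2 l)) = e * T.d2 l := by
  simp [T.axm1, T.comp]

lemma lift_d2_lift (x y e : E) : T.lift y (T.d2 (T.lift x e)) = T.lift (y * x) e := by
  rw [T.axm1, map_sub, T.axm3, ← T.axm6b]
  abel

lemma mul_lift (l : L) (x e : E) : l * T.lift x e = T.lift (T.d2 l * x) e := by
  rw [← T.axm2, T.lift_d2_lift]

lemma lift_d2_mul (e : E) (l l' : L) : T.lift e (T.d2 (l * l')) = T.lift e (T.d2 l) * l' := by
  rw [T.d2_mul, T.lift_mul_d2, ← T.d2_lift_d2, T.axm2]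

lemma lift_mul_left_d2 (x e : E) (l : L) :
    T.lift (x * e) (T.d2 l) = l * T.lift x e + T.actL.act (T.d1 e) (T.lift x (T.d2 l)) := by
  rw [← T.lift_mul_d2, mul_comm e, T.axm3, T.mul_lift, mul_comm x]

def semidirectMul (p q : E × L × L) : E × L × L :=
  (p.1 * q.1,
    T.lift p.1 (T.d2 q.2.1) + T.lift q.1 (T.d2 p.2.1) + p.2.1 * q.2.1,
    (T.lift p.1 (T.d2 q.2.2) + p.2.1 * q.2.2)
      + (T.lift q.1 (T.d2 p.2.2) + q.2.1 * p.2.2) + p.2.2 * q.2.2)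

def semidirectAct (e : E) (p : E × L × L) : E × L × L :=
  (e * p.1, T.lift e (T.d2 p.2.1),
    T.actL.act (T.d1 e) p.2.2 - T.lift (T.d2 p.2.1 + p.1) e)

def d2Plus (p : E × L × L) : E :=
  T.d2 p.2.1 + p.1

lemma d2Plus_semidirectMul (p q : E × L × L) :
    T.d2Plus (T.semidirectMul p q) = T.d2Plus p * T.d2Plus q := by
  simp only [d2Plus, semidirectMul, map_add, T.d2_lift_d2, T.d2_mul]
  ring

lemma semidirectMul_snd_snd (p q : E × L × L) :
    (T.semidirectMul p q).2.2
      = T.lift (T.d2Plus p) (T.d2 q.2.2) + T.lift (T.d2Plus q) (T.d2 p.2.2) + p.2.2 * q.2.2 := by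
  simp only [semidirectMul, d2Plus, map_add, LinearMap.add_apply, T.axm2, mul_comm p.2.2]
  abel

lemma d2Plus_semidirectAct (e : E) (p : E × L × L) :
    T.d2Plus (T.semidirectAct e p) = e * T.d2Plus p := by
  simp only [d2Plus, semidirectAct, T.d2_lift_d2]
  ring

lemma semidirectAct_snd_snd (e : E) (p : E × L × L) :
    (T.semidirectAct e p).2.2 = T.actL.act (T.d1 e) p.2.2 - T.lift (T.d2Plus p) e :=
  rfl

lemma semidirectAct_add_left (e e' : E) (p : E × L × L) :
    T.semidirectAct (e + e') p = T.semidirectAct e p + T.semidirectAct e' p := by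
  ext <;> simp only [semidirectAct, Prod.fst_add, Prod.snd_add, map_add, LinearMap.add_apply]
  · ring
  · abel

lemma semidirectAct_add_right (e : E) (p q : E × L × L) :
    T.semidirectAct e (p + q) = T.semidirectAct e p + T.semidirectAct e q := by
  ext <;> simp only [semidirectAct, Prod.fst_add, Prod.snd_add, map_add, LinearMap.add_apply]
  · ring
  · abel

lemma semidirectAct_smul_left (c : k) (e : E) (p : E × L × L) :
    T.semidirectAct (c • e) p = c • T.semidirectAct e p := by
  ext <;> simp only [semidirectAct, Prod.smul_fst, Prod.smul_snd, map_smul, LinearMap.smul_apply,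
    smul_mul_assoc, smul_sub]

lemma semidirectAct_smul_right (c : k) (e : E) (p : E × L × L) :
    T.semidirectAct e (c • p) = c • T.semidirectAct e p := by
  ext <;> simp only [semidirectAct, Prod.smul_fst, Prod.smul_snd, map_smul, mul_smul_comm,
    ← smul_add, LinearMap.smul_apply, smul_sub]

lemma semidirectAct_semidirectMul (e : E) (p q : E × L × L) :
    T.semidirectAct e (T.semidirectMul p q) = T.semidirectMul (T.semidirectAct e p) q := by
  ext
  · simp only [semidirectAct, semidirectMul, mul_assoc]
  · simp only [semidirectAct, semidirectMul, map_add, T.d2_lift_d2, T.lift_mul_d2, T.lift_d2_mul]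
    rw [mul_comm q.1 e]
  · rw [T.semidirectAct_snd_snd, T.semidirectMul_snd_snd, T.semidirectMul_snd_snd,
      T.d2Plus_semidirectMul, T.d2Plus_semidirectAct, T.semidirectAct_snd_snd, map_add, map_add,
      T.actL.a1, T.axm6b _ (T.d2Plus q), ← T.d2_act, map_sub, map_sub, T.lift_d2_lift,
      mul_comm (T.d2Plus q), mul_comm e, T.lift_mul_left_d2]
    ring

lemma semidirectAct_mul (e e' : E) (p : E × L × L) :
    T.semidirectAct (e * e') p = T.semidirectAct e (T.semidirectAct e' p) := by
  ext
  · exact mul_assoc e e' p.1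
  · exact (T.lift_d2_lift e' e (T.d2 p.2.1)).symm
  · rw [T.semidirectAct_snd_snd, T.semidirectAct_snd_snd, T.semidirectAct_snd_snd,
      T.d2Plus_semidirectAct, T.d1_mul, T.actL.a2, map_sub, mul_comm e e', mul_comm e' (T.d2Plus p),
      T.axm3]
    abel

end TwoCrossedModule

/-- `e ▶² (e',l,l') = (ee', e▶'l, ∂₁(e)▶l' - {(∂₂(l)+e')⊗e})` is an
algebra action of `E` on `(E ⋉ L) ⋉ L`. -/
theorem stmt11 (k L E R : Type*) [CommRing k] [CommRing L] [CommRing E] [CommRing R]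
    [Algebra k L] [Algebra k E] [Algebra k R] (T : TwoCrossedModule k L E R) :
    ∀ (mul3 : E × L × L → E × L × L → E × L × L) (eact : E → E × L × L → E × L × L),
      (mul3 = fun p q => (p.1 * q.1,
        T.lift p.1 (T.d2 q.2.1) + T.lift q.1 (T.d2 p.2.1) + p.2.1 * q.2.1,
        (T.lift p.1 (T.d2 q.2.2) + p.2.1 * q.2.2)
          + (T.lift q.1 (T.d2 p.2.2) + q.2.1 * p.2.2) + p.2.2 * q.2.2)) →
      (eact = fun e p => (e * p.1, T.lift e (T.d2 p.2.1),
        T.actL.act (T.d1 e) p.2.2 - T.lift (T.d2 p.2.1 + p.1) e)) →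
      (∀ e e' p, eact (e + e') p = eact e p + eact e' p) ∧
      (∀ e p q, eact e (p + q) = eact e p + eact e q) ∧
      (∀ (c : k) e p, eact (c • e) p = c • eact e p) ∧
      (∀ (c : k) e p, eact e (c • p) = c • eact e p) ∧
      (∀ e p q, eact e (mul3 p q) = mul3 (eact e p) q) ∧
      (∀ e e' p, eact (e * e') p = eact e (eact e' p)) := by
  rintro mul3 eact rfl rfl
  exact ⟨T.semidirectAct_add_left, T.semidirectAct_add_right, T.semidirectAct_smul_left,
    T.semidirectAct_smul_right, T.semidirectAct_semidirectMul, T.semidirectAct_mul⟩
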